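/- arXiv:2507.17316 — 2 statements merged into one kernel-verified Lean document; each statement's English description precedes it below -/
import Mathlib

section
/- Let γ > 0 and let p̂ be the add-γ estimator, p̂(i) = (n_{i,n} + γ)/(n + Kγ). If n > (4/3)·log(1/δ) with δ ∈ (0,1), then there exists p* ∈ Δ^K such that, with probability strictly greater than δ over n i.i.d. samples from p*, KL(p*‖p̂) ≥ (2·ln(1/δ))/(3n) · ( ln( 2·ln(1/δ)·(n + γK) / (3nγ) ) − 1 ) + γ/(n + γK). -/
open scoped ENNReal
open MeasureTheory

/-- The probability simplex on `Fin K`. -/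
def simplex (K : ℕ) : Set (Fin K → ℝ) :=
  {p | (∀ i, 0 ≤ p i) ∧ ∑ i, p i = 1}

/-- Kullback–Leibler divergence between two vectors on `Fin K`, with the
conventions `0 · log 0 = 0` and value `∞` if `p i > 0 = q i` for some `i`. -/
noncomputable def klD {K : ℕ} (p q : Fin K → ℝ) : ℝ≥0∞ :=
  if ∀ i, 0 < p i → 0 < q i then ENNReal.ofReal (∑ i, p i * Real.log (p i / q i)) else ⊤

/-- The law of `n` i.i.d. samples from the distribution `p` on `Fin K`. -/
noncomputable def iidMeasure (n K : ℕ) (p : Fin K → ℝ) : Measure (Fin n → Fin K) :=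
  ∑ x : Fin n → Fin K, (∏ t, ENNReal.ofReal (p (x t))) • Measure.dirac x

/-- `countTo x t i` is the number of indices `s` among the first `t` samples with `x s = i`. -/
def countTo {n K : ℕ} (x : Fin n → Fin K) (t : ℕ) (i : Fin K) : ℕ :=
  (Finset.univ.filter (fun s : Fin n => (s : ℕ) < t ∧ x s = i)).card

/-!
Take `p*` with mass `1 - ε` on one symbol and `ε = 2 log(1/δ) / (3n)` on a second one. Since
`exp (-3ε/2) < 1 - ε`, with probability `(1 - ε)^n > exp (-3nε/2) = δ` the second symbol is never
drawn. On that event the add-`γ` estimator gives it only `γ / (n + Kγ)`, which produces the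
term `ε log (ε (n + Kγ) / γ)` of the divergence, while `x log (x / y) ≥ x - y` bounds the other
term below by `(K - 1) γ / (n + Kγ) - ε`.
-/

noncomputable def addGammaEstimator {n K : ℕ} (γ : ℝ) (x : Fin n → Fin K) (i : Fin K) : ℝ :=
  ((countTo x n i : ℝ) + γ) / ((n : ℝ) + (K : ℝ) * γ)

noncomputable def twoPoint {K : ℕ} (i j : Fin K) (ε : ℝ) : Fin K → ℝ :=
  Pi.single i (1 - ε) + Pi.single j ε

lemma iidMeasure_prod_le {n K : ℕ} (p : Fin K → ℝ) {S : Set (Fin n → Fin K)}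
    {x : Fin n → Fin K} (hx : x ∈ S) :
    ∏ t, ENNReal.ofReal (p (x t)) ≤ iidMeasure n K p S := by
  rw [iidMeasure, Measure.coe_finsetSum, Finset.sum_apply]
  calc ∏ t, ENNReal.ofReal (p (x t))
      = ((∏ t, ENNReal.ofReal (p (x t))) • Measure.dirac x) S := by
        rw [Measure.smul_apply, Measure.dirac_apply_of_mem hx, smul_eq_mul, mul_one]
    _ ≤ _ := Finset.single_le_sum (f := fun y => ((∏ t, ENNReal.ofReal (p (y t))) •
        Measure.dirac y) S) (fun _ _ => zero_le) (Finset.mem_univ x)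

lemma ofReal_pow_le_iidMeasure_of_const_mem {n K : ℕ} {p : Fin K → ℝ} {c : Fin K} (hc : 0 ≤ p c)
    {S : Set (Fin n → Fin K)} (hS : (fun _ => c) ∈ S) :
    ENNReal.ofReal (p c ^ n) ≤ iidMeasure n K p S := by
  simpa [ENNReal.ofReal_pow hc] using iidMeasure_prod_le p hS

lemma countTo_const {n K : ℕ} (c i : Fin K) :
    countTo (fun _ : Fin n => c) n i = if i = c then n else 0 := by
  by_cases h : i = c
  · subst h; simp [countTo]
  · simp [countTo, h, Ne.symm h]

lemma addGammaEstimator_const {n K : ℕ} (γ : ℝ) (c i : Fin K) :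
    addGammaEstimator γ (fun _ : Fin n => c) i =
      if i = c then ((n : ℝ) + γ) / (n + K * γ) else γ / (n + K * γ) := by
  unfold addGammaEstimator
  split_ifs with h <;> simp [countTo_const, h]

lemma addGammaEstimator_pos {n K : ℕ} {γ : ℝ} (hγ : 0 < γ) (x : Fin n → Fin K) (i : Fin K) :
    0 < addGammaEstimator γ x i := by
  have : (0 : ℝ) < K := Nat.cast_pos.2 i.pos
  unfold addGammaEstimator
  exact div_pos (by positivity) (by positivity)

lemma twoPoint_mem_simplex {K : ℕ} (i j : Fin K) {ε : ℝ} (h0 : 0 ≤ ε)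
    (h1 : ε ≤ 1) : twoPoint i j ε ∈ simplex K := by
  refine ⟨fun k => ?_, ?_⟩
  · simp only [twoPoint, Pi.add_apply, Pi.single_apply]
    split_ifs <;> linarith
  · simp [twoPoint, Finset.sum_add_distrib]

lemma klD_twoPoint {K : ℕ} {i j : Fin K} (hij : i ≠ j) (ε : ℝ) {q : Fin K → ℝ}
    (hq : ∀ k, 0 < q k) :
    klD (twoPoint i j ε) q =
      ENNReal.ofReal ((1 - ε) * Real.log ((1 - ε) / q i) + ε * Real.log (ε / q j)) := by
  rw [klD, if_pos fun k _ => hq k, Fintype.sum_eq_add i j hij fun k hk => by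
    simp [twoPoint, hk.1, hk.2]]
  simp [twoPoint, hij, hij.symm]

lemma Real.sub_le_mul_log_div {x y : ℝ} (hx : 0 < x) (hy : 0 < y) :
    x - y ≤ x * Real.log (x / y) := by
  have := Real.one_sub_inv_le_log_of_pos (div_pos hx hy)
  calc x - y = x * (1 - (x / y)⁻¹) := by field_simp
    _ ≤ x * Real.log (x / y) := by gcongr

lemma Real.exp_neg_three_halves_mul_lt_one_sub {ε : ℝ} (h0 : 0 < ε) (h1 : ε ≤ 1 / 2) :
    Real.exp (-(3 / 2 * ε)) < 1 - ε := by
  have hq := Real.quadratic_le_exp_of_nonneg (x := 3 / 2 * ε) (by positivity)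
  rw [Real.exp_neg, inv_lt_iff_one_lt_mul₀ (Real.exp_pos _)]
  nlinarith [mul_pos h0 h0]

lemma le_klD_twoPoint_addGammaEstimator_const {n K : ℕ} (hK : 2 ≤ K) {γ : ℝ} (hγ : 0 < γ)
    {i j : Fin K} (hij : i ≠ j) {ε : ℝ} (h1 : ε < 1) :
    ENNReal.ofReal (ε * (Real.log (ε / (γ / (n + K * γ))) - 1) + γ / (n + K * γ)) ≤
      klD (twoPoint i j ε) (addGammaEstimator γ (fun _ : Fin n => i)) := by
  rw [klD_twoPoint hij ε (addGammaEstimator_pos hγ _), addGammaEstimator_const,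
    addGammaEstimator_const, if_pos rfl, if_neg hij.symm]
  refine ENNReal.ofReal_le_ofReal ?_
  have hM : (0 : ℝ) < n + K * γ := by positivity
  have hK' : (2 : ℝ) ≤ K := by exact_mod_cast hK
  have hfirst := Real.sub_le_mul_log_div (x := 1 - ε) (y := (n + γ) / (n + K * γ))
    (by linarith) (by positivity)
  have hgap : γ / (n + K * γ) ≤ 1 - (n + γ) / (n + K * γ) := by
    rw [le_sub_iff_add_le, ← add_div, div_le_one hM]; nlinarith
  nlinarith

/-- lower bound for the add-γ estimator. -/
theorem add_gamma_lower_bound (K n : ℕ) (hK : 2 ≤ K)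
    (γ : ℝ) (hγ : 0 < γ)
    (δ : ℝ) (hδ : δ ∈ Set.Ioo (0 : ℝ) 1)
    (hn : (4/3 : ℝ) * Real.log (1/δ) < (n : ℝ)) :
    ∃ pstar ∈ simplex K,
      ENNReal.ofReal δ <
        iidMeasure n K pstar
          {x |
            ENNReal.ofReal
              (2 * Real.log (1/δ) / (3 * n) *
                  (Real.log (2 * Real.log (1/δ) * ((n : ℝ) + γ * K) / (3 * n * γ)) - 1) +
                γ / ((n : ℝ) + γ * K)) ≤
            klD pstar (fun i => ((countTo x n i : ℝ) + γ) / ((n : ℝ) + (K : ℝ) * γ))} := by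
  obtain ⟨hδ0, hδ1⟩ := hδ
  set L := Real.log (1 / δ)
  have hL : 0 < L := Real.log_pos (by rw [lt_div_iff₀ hδ0]; linarith)
  have hn0 : (0 : ℝ) < n := by linarith
  set ε := 2 * L / (3 * n)
  have hε0 : 0 < ε := by positivity
  have hε : ε ≤ 1 / 2 := by rw [div_le_iff₀ (by positivity)]; linarith
  let i : Fin K := ⟨0, by omega⟩
  let j : Fin K := ⟨1, by omega⟩
  have hij : i ≠ j := by simp [i, j, Fin.ext_iff]
  refine ⟨twoPoint i j ε, twoPoint_mem_simplex i j hε0.le (by linarith), ?_⟩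
  have hδ_lt : δ < (1 - ε) ^ n := calc
    δ = Real.exp (-(3 / 2 * ε)) ^ n := by
      rw [← Real.exp_nat_mul, show (n : ℝ) * -(3 / 2 * ε) = -L by simp only [ε]; field_simp,
        Real.exp_neg, Real.exp_log (by positivity), one_div, inv_inv]
    _ < (1 - ε) ^ n := pow_lt_pow_left₀ (Real.exp_neg_three_halves_mul_lt_one_sub hε0 hε)
        (Real.exp_pos _).le (Nat.cast_pos.1 hn0).ne'
  have hp : twoPoint i j ε i = 1 - ε := by simp [twoPoint, hij.symm]
  refine ((ENNReal.ofReal_lt_ofReal_iff (pow_pos (by linarith) n)).2 hδ_lt).trans_le ?_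
  rw [← hp]
  refine ofReal_pow_le_iidMeasure_of_const_mem (by linarith) ?_
  have harg : 2 * L * ((n : ℝ) + K * γ) / (3 * n * γ) = ε / (γ / (n + K * γ)) := by
    simp only [ε]; field_simp
  rw [Set.mem_ofPred_eq, show (n : ℝ) + γ * K = n + K * γ by ring, harg]
  exact le_klD_twoPoint_addGammaEstimator_const hK hγ hij (by linarith)
end

section
/- Let p* ∈ Δ^K, let γ_1,…,γ_K ≥ 0, and define p⁺(i) = (n·p*(i) + γ_i)/(n + ∑_{j=1}^K γ_j). Let α ≥ 0 and let q ∈ Δ^K with q(i) > 0 and log(p⁺(i)/q(i)) ≤ α for all i ∈ [K]. Then ∑_{i=1}^K p*(i)·( log(p⁺(i)/q(i)) )² ≤ (2 + α)·( ∑_{i=1}^K p*(i)·log(p⁺(i)/q(i)) + (∑_{i=1}^K γ_i)/n ). -/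
open scoped ENNReal
open MeasureTheory

/-- The sequential add-`γᵢ` estimator `p_t(i) = (n_{i,t-1} + γᵢ)/(t - 1 + ∑ⱼ γⱼ)`. -/
noncomputable def seqEst {n K : ℕ} (γ : Fin K → ℝ) (x : Fin n → Fin K) (t : ℕ)
    (i : Fin K) : ℝ :=
  ((countTo x (t - 1) i : ℝ) + γ i) / ((t : ℝ) - 1 + ∑ j, γ j)

/-- The smoothed target `p⁺(i) = (n·p*(i) + γᵢ)/(n + ∑ⱼ γⱼ)`. -/
noncomputable def pPlus {K : ℕ} (n : ℕ) (γ : Fin K → ℝ) (p : Fin K → ℝ) (i : Fin K) : ℝ :=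
  ((n : ℝ) * p i + γ i) / ((n : ℝ) + ∑ j, γ j)

/-! Writing `r = log (p⁺ᵢ / qᵢ)`, the elementary bound `r² ≤ (2 + α)(r + e⁻ʳ - 1)` for `r ≤ α`
is weighted by `p*ᵢ` and summed. Since `p*ᵢ e⁻ʳ = p*ᵢ qᵢ / p⁺ᵢ ≤ (n + ∑ γ)/n · qᵢ`, the sum of the
terms `p*ᵢ (e⁻ʳ - 1)` is at most `(n + ∑ γ)/n - 1 = (∑ γ)/n`. -/

open Real

/-- The function `(2 + s) e⁻ˢ + s` is nondecreasing on `[0, ∞)`, its derivative being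
`1 - (1 + s) e⁻ˢ ≥ 0`. -/
lemma two_sub_le_two_add_mul_exp_neg {r : ℝ} (hr : 0 ≤ r) : 2 - r ≤ (2 + r) * exp (-r) := by
  let f : ℝ → ℝ := fun s => (2 + s) * exp (-s) + s
  have hderiv (s : ℝ) : HasDerivAt f (1 - (1 + s) * exp (-s)) s := by
    have h := (((hasDerivAt_id s).const_add 2).mul (hasDerivAt_neg s).exp).add (hasDerivAt_id s)
    exact h.congr_deriv (by simp only [id]; ring)
  have hderiv_nonneg (s : ℝ) : 0 ≤ 1 - (1 + s) * exp (-s) := by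
    have : (1 + s) * exp (-s) ≤ exp s * exp (-s) := by
      gcongr
      linarith [add_one_le_exp s]
    rw [← exp_add, add_neg_cancel, exp_zero] at this
    linarith
  have hmono : MonotoneOn f (Set.Ici 0) :=
    monotoneOn_of_hasDerivWithinAt_nonneg (convex_Ici 0)
      (fun s _ => (hderiv s).continuousAt.continuousWithinAt)
      (fun s _ => (hderiv s).hasDerivWithinAt) (fun s _ => hderiv_nonneg s)
  have := hmono Set.self_mem_Ici hr hr
  simp only [f, neg_zero, exp_zero] at this
  linarith

lemma sq_le_two_add_mul_add_exp_neg_sub_one {r α : ℝ} (hα : 0 ≤ α) (hr : r ≤ α) :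
    r ^ 2 ≤ (2 + α) * (r + exp (-r) - 1) := by
  have hbase : 0 ≤ r + exp (-r) - 1 := by linarith [add_one_le_exp (-r)]
  rcases le_or_gt r 0 with hr0 | hr0
  · have := quadratic_le_exp_of_nonneg (neg_nonneg.mpr hr0)
    nlinarith
  · have := two_sub_le_two_add_mul_exp_neg hr0.le
    nlinarith [mul_nonneg (sub_nonneg.mpr hr) hbase]

lemma mul_sq_log_div_le {p p' q c α : ℝ} (hα : 0 ≤ α) (hp : 0 ≤ p) (hq : 0 < q) (hc : 0 ≤ c)
    (hpp' : p ≤ c * p') (hlog : log (p' / q) ≤ α) :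
    p * log (p' / q) ^ 2 ≤ (2 + α) * (p * log (p' / q) + c * q - p) := by
  rcases hp.eq_or_lt with rfl | hp
  · simp only [zero_mul, sub_zero]
    positivity
  have hp' : 0 < p' := pos_of_mul_pos_right (hp.trans_le hpp') hc
  have hexp : p * exp (-log (p' / q)) ≤ c * q := by
    rw [exp_neg, exp_log (div_pos hp' hq), inv_div, ← mul_div_assoc, div_le_iff₀ hp']
    nlinarith
  have := mul_le_mul_of_nonneg_left (sq_le_two_add_mul_add_exp_neg_sub_one hα hlog) hp.le
  nlinarith

/-- A generalized Yang–Barron inequality: the weights `p` only need to be dominated by `c • p'`. -/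
lemma sum_mul_sq_log_div_le {ι : Type*} [Fintype ι] {p p' q : ι → ℝ} {c α : ℝ} (hα : 0 ≤ α)
    (hp : ∀ i, 0 ≤ p i) (hq : ∀ i, 0 < q i) (hc : 0 ≤ c) (hpp' : ∀ i, p i ≤ c * p' i)
    (hlog : ∀ i, log (p' i / q i) ≤ α) :
    ∑ i, p i * log (p' i / q i) ^ 2 ≤
      (2 + α) * (∑ i, p i * log (p' i / q i) + c * ∑ i, q i - ∑ i, p i) := by
  calc ∑ i, p i * log (p' i / q i) ^ 2
      ≤ ∑ i, (2 + α) * (p i * log (p' i / q i) + c * q i - p i) :=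
        Finset.sum_le_sum fun i _ => mul_sq_log_div_le hα (hp i) (hq i) hc (hpp' i) (hlog i)
    _ = (2 + α) * (∑ i, p i * log (p' i / q i) + c * ∑ i, q i - ∑ i, p i) := by
        rw [← Finset.mul_sum, Finset.sum_sub_distrib, Finset.sum_add_distrib, Finset.mul_sum]

lemma div_mul_pPlus {K n : ℕ} (γ p : Fin K → ℝ) (hn : (n : ℝ) ≠ 0) (hΓ : (n : ℝ) + ∑ j, γ j ≠ 0)
    (i : Fin K) : ((n : ℝ) + ∑ j, γ j) / n * pPlus n γ p i = p i + γ i / n := by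
  rw [pPlus]
  field_simp

theorem yang_barron_corollary_general (K n : ℕ) (hn : 1 ≤ n)
    (pstar : Fin K → ℝ) (hp : pstar ∈ simplex K)
    (γ : Fin K → ℝ) (hγ : ∀ i, 0 ≤ γ i)
    (α : ℝ) (hα : 0 ≤ α)
    (q : Fin K → ℝ) (hq : q ∈ simplex K) (hqpos : ∀ i, 0 < q i)
    (hlog : ∀ i, Real.log (pPlus n γ pstar i / q i) ≤ α) :
    ∑ i, pstar i * (Real.log (pPlus n γ pstar i / q i)) ^ 2 ≤
      (2 + α) *
        (∑ i, pstar i * Real.log (pPlus n γ pstar i / q i) + (∑ i, γ i) / n) := by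
  have hnpos : (0 : ℝ) < n := by exact_mod_cast hn
  have hΓ : 0 ≤ ∑ j, γ j := Finset.sum_nonneg fun j _ => hγ j
  have hdom (i : Fin K) : pstar i ≤ ((n : ℝ) + ∑ j, γ j) / n * pPlus n γ pstar i := by
    rw [div_mul_pPlus γ pstar hnpos.ne' (by positivity)]
    linarith [div_nonneg (hγ i) hnpos.le]
  have := sum_mul_sq_log_div_le hα hp.1 hqpos (by positivity) hdom hlog
  rw [hq.2, hp.2, mul_one, add_div, div_self hnpos.ne'] at this
  convert this using 2
  ring

/-- corollary of the generalized Yang–Barron inequality for the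
smoothed target `p⁺`. -/
theorem yang_barron_corollary (K n : ℕ) (hK : 2 ≤ K) (hn : 1 ≤ n)
    (pstar : Fin K → ℝ) (hp : pstar ∈ simplex K)
    (γ : Fin K → ℝ) (hγ : ∀ i, 0 ≤ γ i)
    (α : ℝ) (hα : 0 ≤ α)
    (q : Fin K → ℝ) (hq : q ∈ simplex K) (hqpos : ∀ i, 0 < q i)
    (hlog : ∀ i, Real.log (pPlus n γ pstar i / q i) ≤ α) :
    ∑ i, pstar i * (Real.log (pPlus n γ pstar i / q i)) ^ 2 ≤
      (2 + α) *
        (∑ i, pstar i * Real.log (pPlus n γ pstar i / q i) + (∑ i, γ i) / n) :=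
  yang_barron_corollary_general K n hn pstar hp γ hγ α hα q hq hqpos hlog
end
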